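/- Let q ∈ (0,1/2), p̄ > 0, α > 2p̄ and ε > 0. Then (α + ε/2)·(1 − h2((p̄/(α + ε/2)) ⋆ q)) ≤ α·(1 − h2((p̄/α) ⋆ q)) + ε/2. (Equivalently, since x ↦ x·h2((p̄/x) ⋆ q) is increasing, the mutual information bound ℓ(1 − h2((p̄n/ℓ) ⋆ q)) with ℓ = (α + ε/2)n does not exceed nα(1 − h2((p̄/α) ⋆ q)) + nε/2; this is the entropy-deficit step in the babble-and-snoop converse argument.) -/

import Mathlib

/-! Since `(t·x) ⋆ q = t·(x ⋆ q) + (1-t)·q`, the point `(p/b) ⋆ q` lies on the segment from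
`(p/a) ⋆ q` to `q` at weight `a/b`; concavity of the entropy and `h2 q ≥ 0` then give
`a · h2 ((p/a) ⋆ q) ≤ b · h2 ((p/b) ⋆ q)` for `0 ≤ p ≤ a ≤ b`. The deficit
`ℓ (1 - h2 ((p/ℓ) ⋆ q))` therefore grows by at most `b - a` when `ℓ` grows from `a` to `b`. -/

/-- Binary entropy (base 2), with the conventions `h2 0 = h2 1 = 0`
(automatic since `Real.log 0 = 0`). -/
noncomputable def h2 (y : ℝ) : ℝ := -(y * Real.logb 2 y) - (1 - y) * Real.logb 2 (1 - y)

/-- For `x, y ∈ [0,1]`, `x ⋆ y = x(1−y) + y(1−x)`. -/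
noncomputable def bstar (x y : ℝ) : ℝ := x * (1 - y) + y * (1 - x)

open Real

lemma h2_eq_binEntropy_div_log_two (y : ℝ) : h2 y = binEntropy y / log 2 := by
  simp only [h2, binEntropy, logb, log_inv]
  ring

lemma bstar_mul_left (t x q : ℝ) : bstar (t * x) q = t * bstar x q + (1 - t) * q := by
  simp only [bstar]
  ring

lemma bstar_mem_Icc {x q : ℝ} (hx : x ∈ Set.Icc (0 : ℝ) 1) (hq : q ∈ Set.Icc (0 : ℝ) 1) :
    bstar x q ∈ Set.Icc (0 : ℝ) 1 := by
  obtain ⟨hx0, hx1⟩ := hx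
  obtain ⟨hq0, hq1⟩ := hq
  constructor <;> simp only [bstar] <;> nlinarith [mul_nonneg hx0 hq0]

lemma ConcaveOn.mul_le_map_segment {s : Set ℝ} {f : ℝ → ℝ} (hf : ConcaveOn ℝ s f)
    {x y t : ℝ} (hx : x ∈ s) (hy : y ∈ s) (hfy : 0 ≤ f y) (ht0 : 0 ≤ t) (ht1 : t ≤ 1) :
    t * f x ≤ f (t * x + (1 - t) * y) := by
  have h := hf.2 hx hy ht0 (sub_nonneg.2 ht1) (add_sub_cancel t 1)
  simp only [smul_eq_mul] at h
  nlinarith [mul_nonneg (sub_nonneg.2 ht1) hfy]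

lemma mul_binEntropy_bstar_div_le {p q a b : ℝ} (hp : 0 ≤ p) (hpa : p ≤ a) (hab : a ≤ b)
    (hq : q ∈ Set.Icc (0 : ℝ) 1) :
    a * binEntropy (bstar (p / a) q) ≤ b * binEntropy (bstar (p / b) q) := by
  rcases (hp.trans hpa).eq_or_lt with rfl | ha
  · obtain rfl : p = 0 := le_antisymm hpa hp
    simpa [bstar] using mul_nonneg hab (binEntropy_nonneg hq.1 hq.2)
  have hb : 0 < b := ha.trans_le hab
  have hpa_mem : p / a ∈ Set.Icc (0 : ℝ) 1 := ⟨div_nonneg hp ha.le, (div_le_one ha).2 hpa⟩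
  have hscale : p / b = a / b * (p / a) := by field_simp
  have hseg := strictConcave_binEntropy.concaveOn.mul_le_map_segment
    (bstar_mem_Icc hpa_mem hq) hq (binEntropy_nonneg hq.1 hq.2)
    (div_nonneg ha.le hb.le) ((div_le_one hb).2 hab)
  rw [hscale, bstar_mul_left]
  calc a * binEntropy (bstar (p / a) q)
      = b * (a / b * binEntropy (bstar (p / a) q)) := by field_simp
    _ ≤ b * binEntropy (a / b * bstar (p / a) q + (1 - a / b) * q) :=
      mul_le_mul_of_nonneg_left hseg hb.le

lemma mul_h2_bstar_div_le {p q a b : ℝ} (hp : 0 ≤ p) (hpa : p ≤ a) (hab : a ≤ b)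
    (hq : q ∈ Set.Icc (0 : ℝ) 1) :
    a * h2 (bstar (p / a) q) ≤ b * h2 (bstar (p / b) q) := by
  simp only [h2_eq_binEntropy_div_log_two, ← mul_div_assoc]
  exact div_le_div_of_nonneg_right (mul_binEntropy_bstar_div_le hp hpa hab hq)
    (log_nonneg one_le_two)

/-- For `q ∈ (0,1/2)`, `p̄ > 0`, `α > 2p̄` and `ε > 0`,
`(α + ε/2)·(1 − h2((p̄/(α + ε/2)) ⋆ q)) ≤ α·(1 − h2((p̄/α) ⋆ q)) + ε/2`. -/
theorem entropy_deficit_step (q pbar α ε : ℝ) (hq : q ∈ Set.Ioo (0 : ℝ) (1/2))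
    (hpbar : 0 < pbar) (hα : 2 * pbar < α) (hε : 0 < ε) :
    (α + ε/2) * (1 - h2 (bstar (pbar / (α + ε/2)) q))
      ≤ α * (1 - h2 (bstar (pbar / α) q)) + ε/2 := by
  have hmono := mul_h2_bstar_div_le (p := pbar) (q := q) (a := α) (b := α + ε/2)
    hpbar.le (by linarith) (by linarith) ⟨hq.1.le, by linarith [hq.2]⟩
  linarith
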